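/- arXiv:0909.1466 — 2 statements merged into one kernel-verified Lean document; each statement's English description precedes it below -/
import Mathlib

section
/- More generally, for any two functions h, g : {0,1}^n → ℂ, any i ∈ [n] and any S ⊆ {0,1}^{n-1}, |⟨h, E_{i,S} g⟩ − ⟨h, g⟩| ≤ √(2^{n−1} I_i(h)) · √(2^{n−1} I_i(g)). -/
open scoped BigOperators
open Complex

/-- Strings in `{0,1}^n`. -/
abbrev Bn (n : ℕ) := Fin n → Bool

/-- Hermitian inner product `⟨h,g⟩ = ∑ x, h(x)* g(x)` on functions `{0,1}^n → ℂ`. -/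
noncomputable def ip {n : ℕ} (h g : Bn n → ℂ) : ℂ :=
  ∑ x : Bn n, (starRingEnd ℂ) (h x) * g x

/-- Flip the `i`-th bit of `x`. -/
def bflip {n : ℕ} (i : Fin n) (x : Bn n) : Bn n := Function.update x i (!x i)

/-- Controlled bit flip `E_{i,S}`. The control set `S ⊆ {0,1}^{n-1}` is encoded as an
`i`-invariant set of full strings (membership not depending on bit `i`). -/
def ctrlX {n : ℕ} (i : Fin n) (S : Finset (Bn n)) (g : Bn n → ℂ) : Bn n → ℂ :=
  fun x => if x ∈ S then g (bflip i x) else g x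

/-- `E_{i,{j}}`: flip bit `i` exactly when all other coordinates agree with `q`. -/
def ctrlXpt {n : ℕ} (i : Fin n) (q : Bn n) (g : Bn n → ℂ) : Bn n → ℂ :=
  fun x => if ∀ j, j ≠ i → x j = q j then g (bflip i x) else g x

/-- Influence `I_i(φ) = E_x |φ(x) - φ(x ⊕ e_i)|²`. -/
noncomputable def infl {n : ℕ} (i : Fin n) (φ : Bn n → ℂ) : ℝ :=
  (∑ x : Bn n, ‖φ x - φ (bflip i x)‖ ^ 2) / 2 ^ n


/-!
Write `Dφ(x) = φ(x) - φ(x ⊕ eᵢ)` (`bitDiff i φ`). The difference `⟨h, E_{i,S} g⟩ - ⟨h, g⟩` is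
`-∑_{x ∈ S} h̄(x) Dg(x)`. Since `S` is stable under flipping bit `i` and `Dg` is odd under the
flip, re-indexing by the flip and averaging turns this into `-½ ∑_{x ∈ S} D̄h(x) Dg(x)`, which
Cauchy–Schwarz bounds by `½ ‖Dh‖₂ ‖Dg‖₂ = √(‖Dh‖₂²/2) √(‖Dg‖₂²/2)`, and `‖Dφ‖₂²/2 = 2^{n-1} I_i(φ)`.
-/

open Finset ComplexConjugate

theorem Complex.norm_sum_conj_mul_le {ι : Type*} (s : Finset ι) (u v : ι → ℂ) :
    ‖∑ x ∈ s, conj (u x) * v x‖ ≤ √(∑ x ∈ s, ‖u x‖ ^ 2) * √(∑ x ∈ s, ‖v x‖ ^ 2) :=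
  calc ‖∑ x ∈ s, conj (u x) * v x‖ ≤ ∑ x ∈ s, ‖conj (u x) * v x‖ := norm_sum_le _ _
    _ = ∑ x ∈ s, ‖u x‖ * ‖v x‖ := by simp only [norm_mul, RCLike.norm_conj]
    _ ≤ _ := Real.sum_mul_le_sqrt_mul_sqrt _ _ _

theorem Real.sqrt_div_two_mul_sqrt_div_two (a b : ℝ) : √(a / 2) * √(b / 2) = √a * √b / 2 := by
  rw [Real.sqrt_div' a zero_le_two, Real.sqrt_div' b zero_le_two, div_mul_div_comm,
    Real.mul_self_sqrt zero_le_two]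

section BitFlip

variable {n : ℕ} (i : Fin n)

theorem bflip_involutive : Function.Involutive (bflip i) := by
  intro x
  funext j
  by_cases hj : j = i
  · subst hj
    simp [bflip]
  · simp [bflip, Function.update_of_ne hj]

def bitDiff (φ : Bn n → ℂ) (x : Bn n) : ℂ := φ x - φ (bflip i x)

theorem bitDiff_bflip (φ : Bn n → ℂ) (x : Bn n) : bitDiff i φ (bflip i x) = -bitDiff i φ x := by
  simp only [bitDiff, bflip_involutive i x, neg_sub]

theorem two_pow_pred_mul_infl (φ : Bn n → ℂ) :
    2 ^ (n - 1) * infl i φ = (∑ x, ‖bitDiff i φ x‖ ^ 2) / 2 := by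
  obtain ⟨m, rfl⟩ : ∃ m, n = m + 1 := Nat.exists_eq_add_one.mpr i.pos
  rw [infl, Nat.add_sub_cancel, pow_succ, mul_div_assoc', mul_div_mul_left _ _ (by positivity)]
  rfl

theorem ip_ctrlX_sub_ip (h g : Bn n → ℂ) (S : Finset (Bn n)) :
    ip h (ctrlX i S g) - ip h g = -∑ x ∈ S, conj (h x) * bitDiff i g x := by
  rw [ip, ip, ← sum_sub_distrib, ← sum_neg_distrib, ← sum_filter_add_sum_filter_not univ (· ∈ S),
    filter_mem_eq_inter, univ_inter, sum_eq_zero (s := filter _ _), add_zero]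
  · refine sum_congr rfl fun x hx => ?_
    simp only [ctrlX, hx, if_true, bitDiff]
    ring
  · intro x hx
    simp [ctrlX, (mem_filter.mp hx).2]

theorem two_mul_ip_ctrlX_sub_ip (h g : Bn n → ℂ) (S : Finset (Bn n))
    (hS : ∀ x, bflip i x ∈ S ↔ x ∈ S) :
    2 * (ip h (ctrlX i S g) - ip h g) = -∑ x ∈ S, conj (bitDiff i h x) * bitDiff i g x := by
  have hflip : ∑ x ∈ S, conj (h x) * bitDiff i g x
      = -∑ x ∈ S, conj (h (bflip i x)) * bitDiff i g x := by
    rw [← sum_neg_distrib]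
    refine sum_equiv (bflip_involutive i).toPerm (fun x => (hS x).symm) fun x _ => ?_
    simp [bitDiff_bflip, bflip_involutive i x]
  rw [ip_ctrlX_sub_ip, two_mul, ← neg_add]
  nth_rewrite 2 [hflip]
  rw [← sub_eq_add_neg, ← sum_sub_distrib]
  simp only [bitDiff, map_sub, sub_mul]

end BitFlip

/-- `|⟨h, E_{i,S} g⟩ - ⟨h,g⟩| ≤ √(2^{n-1} I_i(h)) · √(2^{n-1} I_i(g))`. -/
theorem stmt1 {n : ℕ} (h g : Bn n → ℂ) (i : Fin n) (S : Finset (Bn n))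
    (hS : ∀ x, bflip i x ∈ S ↔ x ∈ S) :
    ‖ip h (ctrlX i S g) - ip h g‖ ≤
      Real.sqrt (2 ^ (n - 1) * infl i h) * Real.sqrt (2 ^ (n - 1) * infl i g) := by
  rw [two_pow_pred_mul_infl, two_pow_pred_mul_infl, Real.sqrt_div_two_mul_sqrt_div_two]
  calc ‖ip h (ctrlX i S g) - ip h g‖
      = ‖∑ x ∈ S, conj (bitDiff i h x) * bitDiff i g x‖ / 2 := by
        rw [← norm_neg (∑ x ∈ S, _), ← two_mul_ip_ctrlX_sub_ip i h g S hS, norm_mul,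
          Complex.norm_two]
        ring
    _ ≤ √(∑ x ∈ S, ‖bitDiff i h x‖ ^ 2) * √(∑ x ∈ S, ‖bitDiff i g x‖ ^ 2) / 2 := by
        gcongr
        exact Complex.norm_sum_conj_mul_le S _ _
    _ ≤ √(∑ x, ‖bitDiff i h x‖ ^ 2) * √(∑ x, ‖bitDiff i g x‖ ^ 2) / 2 := by
        gcongr <;> exact subset_univ S
end

section
/- Let φ, ψ ∈ ℂ^N be orthonormal vectors and set φ' = (φ+ψ)/√2, ψ' = (φ−ψ)/√2. Then φ', ψ' are orthonormal and Σ_x |φ'(x)|·|ψ'(x)| ≥ 1 − Σ_x |φ(x)|·|ψ(x)|. In particular max(Σ_x |φ(x)||ψ(x)|, Σ_x |φ'(x)||ψ'(x)|) ≥ 1/2. -/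
/-!
The rotation `(φ, ψ) ↦ ((φ + ψ)/√2, (φ - ψ)/√2)` is unitary, so it preserves orthonormality.
For the overlap bound, pointwise `‖a + b‖ ‖a - b‖ ≥ (‖a‖ - ‖b‖)²` by the reverse triangle
inequality, and summing `(‖φ x‖ - ‖ψ x‖)² / 2` over `x` gives `1 - ∑ ‖φ x‖ ‖ψ x‖` because
`φ` and `ψ` are unit vectors.
-/

open scoped BigOperators ComplexConjugate

lemma sq_norm_sub_norm_le_norm_add_mul_norm_sub {E : Type*} [SeminormedAddCommGroup E]
    (a b : E) : (‖a‖ - ‖b‖) ^ 2 ≤ ‖a + b‖ * ‖a - b‖ := by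
  have h_add : |‖a‖ - ‖b‖| ≤ ‖a + b‖ := by
    simpa [sub_neg_eq_add] using abs_norm_sub_norm_le a (-b)
  calc (‖a‖ - ‖b‖) ^ 2 = |‖a‖ - ‖b‖| * |‖a‖ - ‖b‖| := by rw [← sq_abs, sq]
    _ ≤ ‖a + b‖ * ‖a - b‖ :=
      mul_le_mul h_add (abs_norm_sub_norm_le a b) (abs_nonneg _) (norm_nonneg _)

namespace Complex

lemma ofReal_sqrt_two_mul_self : ((√2 : ℝ) : ℂ) * ((√2 : ℝ) : ℂ) = 2 := by
  norm_cast
  exact Real.mul_self_sqrt zero_le_two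

lemma conj_div_sqrt_two_mul_div_sqrt_two (a b : ℂ) :
    conj (a / (√2 : ℝ)) * (b / (√2 : ℝ)) = conj a * b / 2 := by
  rw [map_div₀, conj_ofReal, div_mul_div_comm, ofReal_sqrt_two_mul_self]

lemma norm_div_sqrt_two_mul_norm_div_sqrt_two (a b : ℂ) :
    ‖a / (√2 : ℝ)‖ * ‖b / (√2 : ℝ)‖ = ‖a‖ * ‖b‖ / 2 := by
  rw [norm_div, norm_div, norm_real, Real.norm_of_nonneg (Real.sqrt_nonneg 2),
    div_mul_div_comm, Real.mul_self_sqrt zero_le_two]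

lemma sq_norm_sub_norm_div_two_le (a b : ℂ) :
    (‖a‖ - ‖b‖) ^ 2 / 2 ≤ ‖(a + b) / (√2 : ℝ)‖ * ‖(a - b) / (√2 : ℝ)‖ := by
  rw [norm_div_sqrt_two_mul_norm_div_sqrt_two]
  gcongr
  exact sq_norm_sub_norm_le_norm_add_mul_norm_sub a b

variable {N : Type*} [Fintype N]

lemma sum_conj_mul_swap (f g : N → ℂ) :
    ∑ x, conj (g x) * f x = conj (∑ x, conj (f x) * g x) := by
  simp [map_sum, mul_comm]

lemma ofReal_sum_norm_sq (f : N → ℂ) :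
    ((∑ x, ‖f x‖ ^ 2 : ℝ) : ℂ) = ∑ x, conj (f x) * f x := by
  push_cast
  exact Finset.sum_congr rfl fun x _ => (conj_mul' (f x)).symm

lemma sum_norm_sq_eq_one {f : N → ℂ} (hf : ∑ x, conj (f x) * f x = 1) :
    ∑ x, ‖f x‖ ^ 2 = 1 := by
  exact_mod_cast (ofReal_sum_norm_sq f).trans hf

variable {φ ψ : N → ℂ}

lemma one_sub_sum_norm_mul_norm_le (hφ : ∑ x, ‖φ x‖ ^ 2 = 1) (hψ : ∑ x, ‖ψ x‖ ^ 2 = 1) :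
    1 - ∑ x, ‖φ x‖ * ‖ψ x‖ ≤
      ∑ x, ‖(φ x + ψ x) / (√2 : ℝ)‖ * ‖(φ x - ψ x) / (√2 : ℝ)‖ :=
  calc 1 - ∑ x, ‖φ x‖ * ‖ψ x‖ = ∑ x, ((‖φ x‖ ^ 2 + ‖ψ x‖ ^ 2) / 2 - ‖φ x‖ * ‖ψ x‖) := by
        rw [Finset.sum_sub_distrib, ← Finset.sum_div, Finset.sum_add_distrib, hφ, hψ]
        norm_num
    _ = ∑ x, (‖φ x‖ - ‖ψ x‖) ^ 2 / 2 := Finset.sum_congr rfl fun _ _ => by ring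
    _ ≤ _ := Finset.sum_le_sum fun x _ => sq_norm_sub_norm_div_two_le (φ x) (ψ x)

section Orthonormal

variable (hφ : ∑ x, conj (φ x) * φ x = 1) (hψ : ∑ x, conj (ψ x) * ψ x = 1)
  (hortho : ∑ x, conj (φ x) * ψ x = 0)
include hφ hψ hortho

lemma sum_conj_mul_self_add_div_sqrt_two :
    ∑ x, conj ((φ x + ψ x) / (√2 : ℝ)) * ((φ x + ψ x) / (√2 : ℝ)) = 1 := by
  simp only [conj_div_sqrt_two_mul_div_sqrt_two, map_add, add_mul, mul_add, add_div,
    Finset.sum_add_distrib, ← Finset.sum_div, hφ, hψ, hortho,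
    sum_conj_mul_swap φ ψ, map_zero]
  norm_num

lemma sum_conj_mul_self_sub_div_sqrt_two :
    ∑ x, conj ((φ x - ψ x) / (√2 : ℝ)) * ((φ x - ψ x) / (√2 : ℝ)) = 1 := by
  simp only [conj_div_sqrt_two_mul_div_sqrt_two, map_sub, sub_mul, mul_sub, sub_div,
    Finset.sum_sub_distrib, ← Finset.sum_div, hφ, hψ, hortho,
    sum_conj_mul_swap φ ψ, map_zero]
  norm_num

lemma sum_conj_add_div_sqrt_two_mul_sub_div_sqrt_two :
    ∑ x, conj ((φ x + ψ x) / (√2 : ℝ)) * ((φ x - ψ x) / (√2 : ℝ)) = 0 := by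
  simp only [conj_div_sqrt_two_mul_div_sqrt_two, map_add, add_mul, mul_sub, sub_div, add_div,
    Finset.sum_sub_distrib, Finset.sum_add_distrib, ← Finset.sum_div, hφ, hψ, hortho,
    sum_conj_mul_swap φ ψ, map_zero]
  norm_num

end Orthonormal

end Complex

/-- if `φ, ψ` are orthonormal and `φ' = (φ+ψ)/√2`, `ψ' = (φ-ψ)/√2`,
then `φ', ψ'` are orthonormal, `∑|φ'||ψ'| ≥ 1 - ∑|φ||ψ|`, and consequently one of
the two overlap sums is at least `1/2`. -/
theorem stmt10 {N : Type*} [Fintype N] (φ ψ φ' ψ' : N → ℂ)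
    (hφ : (∑ x : N, (starRingEnd ℂ) (φ x) * φ x) = 1)
    (hψ : (∑ x : N, (starRingEnd ℂ) (ψ x) * ψ x) = 1)
    (hortho : (∑ x : N, (starRingEnd ℂ) (φ x) * ψ x) = 0)
    (hφ' : φ' = fun x => (φ x + ψ x) / Real.sqrt 2)
    (hψ' : ψ' = fun x => (φ x - ψ x) / Real.sqrt 2) :
    (∑ x : N, (starRingEnd ℂ) (φ' x) * φ' x) = 1 ∧
    (∑ x : N, (starRingEnd ℂ) (ψ' x) * ψ' x) = 1 ∧
    (∑ x : N, (starRingEnd ℂ) (φ' x) * ψ' x) = 0 ∧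
    1 - (∑ x : N, ‖φ x‖ * ‖ψ x‖) ≤
      ∑ x : N, ‖φ' x‖ * ‖ψ' x‖ ∧
    (1 / 2 : ℝ) ≤ max (∑ x : N, ‖φ x‖ * ‖ψ x‖)
      (∑ x : N, ‖φ' x‖ * ‖ψ' x‖) := by
  subst hφ' hψ'
  have h_overlap :=
    Complex.one_sub_sum_norm_mul_norm_le (Complex.sum_norm_sq_eq_one hφ)
      (Complex.sum_norm_sq_eq_one hψ)
  refine ⟨Complex.sum_conj_mul_self_add_div_sqrt_two hφ hψ hortho,
    Complex.sum_conj_mul_self_sub_div_sqrt_two hφ hψ hortho,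
    Complex.sum_conj_add_div_sqrt_two_mul_sub_div_sqrt_two hφ hψ hortho, h_overlap, ?_⟩
  by_contra! h
  rw [max_lt_iff] at h
  linarith [h.1, h.2]
end
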